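/- Let r ≥ s ≥ 1 be integers and f,g : {0,1}^n → ℕ. Then log₂( Σ_{x,y ∈ {0,1}^n} r^{a(x,y)} s^{d(x,y)} f(x) g(y) ) ≤ n( log₂(r+s) − s/r ) + ((r+s)/(2r)) [ log₂( Σ_x f(x)^{2r/(r+s)} ) + log₂( Σ_y g(y)^{2r/(r+s)} ) ]. -/

import Mathlib

open Finset Real

/-- Number of coordinates on which `x` and `y` agree. -/
def agree {n : ℕ} (x y : Fin n → Bool) : ℕ := (Finset.univ.filter (fun i => x i = y i)).card

/-!
Put `p = 2r/(r+s) ∈ [1, 2]`, so that `r = (r+s)p/2` and `s = (r+s)(2-p)/2`. The kernel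
`r^a(x,y) s^d(x,y)` is the product over the coordinates of a kernel on `Bool`, so the bilinear form
it defines satisfies `⟨f, K g⟩ ≤ Cⁿ ‖f‖_p ‖g‖_p` with `C = (r+s) 2^(-s/r)` as soon as it does for
`n = 1`. In dimension one this is Bonami's two-point inequality
`p(ac+bd) + (2-p)(ad+bc) ≤ 4 M_p(a,b) M_p(c,d)` for the power means `M_p`, which Cauchy–Schwarz
reduces to `((a+b)/2)² + (p-1)((a-b)/2)² ≤ M_p(a,b)²`, and then by homogeneity and Bernoulli's
inequality to `(1+x)^p + (1-x)^p ≥ 2 + p(p-1)x²` on `[0, 1]`, proved by differentiating twice.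
Taking `log₂` gives the theorem; when the form vanishes, `log₂ 0 = 0` and the right-hand side is
nonnegative because `f`, `g` take values in `ℕ` and `log₂(r+s) ≥ 1 ≥ s/r`.
-/

lemma two_le_one_add_rpow_add_one_sub_rpow {e x : ℝ} (he : e ≤ 0) (hx₁ : -1 < x)
    (hx₂ : x < 1) : 2 ≤ (1 + x) ^ e + (1 - x) ^ e := by
  have hpos : 0 < 1 + x := by linarith
  have hneg : 0 < 1 - x := by linarith
  -- AM–GM, since the product is `(1 - x²) ^ e ≥ 1`
  have hprod : 1 ≤ (1 + x) ^ e * (1 - x) ^ e := by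
    rw [← mul_rpow hpos.le hneg.le]
    exact one_le_rpow_of_pos_of_le_one_of_nonpos (by positivity) (by nlinarith [sq_nonneg x]) he
  nlinarith [sq_nonneg ((1 + x) ^ e - (1 - x) ^ e), rpow_pos_of_pos hpos e,
    rpow_pos_of_pos hneg e]

lemma le_of_hasDerivAt_nonneg {g g' : ℝ → ℝ} {a b x : ℝ}
    (hg : ContinuousOn g (Set.Icc a b)) (hg' : ∀ t ∈ Set.Ioo a b, HasDerivAt g (g' t) t)
    (hg'₀ : ∀ t ∈ Set.Ioo a b, 0 ≤ g' t) (hx : x ∈ Set.Icc a b) : g a ≤ g x := by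
  have hmono : MonotoneOn g (Set.Icc a b) := by
    refine monotoneOn_of_hasDerivWithinAt_nonneg (convex_Icc a b) hg (fun t ht => ?_)
      (fun t ht => hg'₀ t (by rwa [interior_Icc] at ht))
    exact (hg' t (by rwa [interior_Icc] at ht)).hasDerivWithinAt
  exact hmono (Set.left_mem_Icc.2 (hx.1.trans hx.2)) hx hx.1

lemma hasDerivAt_one_add_rpow {q t : ℝ} (ht : 0 < 1 + t) :
    HasDerivAt (fun u => (1 + u) ^ q) (q * (1 + t) ^ (q - 1)) t := by
  simpa using ((hasDerivAt_id t).const_add 1).rpow_const (p := q) (Or.inl ht.ne')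

lemma hasDerivAt_one_sub_rpow {q t : ℝ} (ht : 0 < 1 - t) :
    HasDerivAt (fun u => (1 - u) ^ q) (-(q * (1 - t) ^ (q - 1))) t := by
  simpa using ((hasDerivAt_id t).const_sub 1).rpow_const (p := q) (Or.inl ht.ne')

lemma two_mul_mul_le_one_add_rpow_sub_one_sub_rpow {q x : ℝ} (hq₀ : 0 ≤ q) (hq₁ : q ≤ 1)
    (hx : x ∈ Set.Icc (0 : ℝ) 1) : 2 * q * x ≤ (1 + x) ^ q - (1 - x) ^ q := by
  have hcont : Continuous fun t : ℝ => (1 + t) ^ q - (1 - t) ^ q - 2 * q * t := by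
    have := continuous_rpow_const hq₀
    fun_prop
  have hmono := le_of_hasDerivAt_nonneg hcont.continuousOn (fun t ht =>
      ((hasDerivAt_one_add_rpow (by linarith [ht.1])).sub
        (hasDerivAt_one_sub_rpow (by linarith [ht.2]))).sub
        ((hasDerivAt_id t).const_mul (2 * q))) (fun t ht => by
      have := two_le_one_add_rpow_add_one_sub_rpow (e := q - 1) (by linarith)
        (by linarith [ht.1]) ht.2
      simp only [mul_one]
      nlinarith) hx
  simpa using hmono

lemma two_add_mul_sq_le_one_add_rpow_add_one_sub_rpow {p x : ℝ} (hp₁ : 1 ≤ p)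
    (hp₂ : p ≤ 2) (hx : x ∈ Set.Icc (0 : ℝ) 1) :
    2 + p * (p - 1) * x ^ 2 ≤ (1 + x) ^ p + (1 - x) ^ p := by
  have hcont : Continuous fun t : ℝ => (1 + t) ^ p + (1 - t) ^ p - p * (p - 1) * t ^ 2 := by
    have := continuous_rpow_const (by linarith : 0 ≤ p)
    fun_prop
  have hmono := le_of_hasDerivAt_nonneg hcont.continuousOn (fun t ht =>
      ((hasDerivAt_one_add_rpow (by linarith [ht.1])).add
        (hasDerivAt_one_sub_rpow (by linarith [ht.2]))).sub
        ((hasDerivAt_pow 2 t).const_mul (p * (p - 1)))) (fun t ht => by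
      have := two_mul_mul_le_one_add_rpow_sub_one_sub_rpow (q := p - 1) (by linarith)
        (by linarith) (Set.Ioo_subset_Icc_self ht)
      push_cast
      nlinarith) hx
  simp at hmono
  linarith

lemma rpow_inv_sq {m p : ℝ} (hm : 0 ≤ m) : (m ^ p⁻¹) ^ 2 = m ^ (2 / p) := by
  rw [← rpow_natCast, ← rpow_mul hm, mul_comm]
  norm_num [div_eq_mul_inv]

lemma one_add_mul_sq_le_rpow_inv_sq {p x : ℝ} (hp₁ : 1 ≤ p) (hp₂ : p ≤ 2)
    (hx : x ∈ Set.Icc (0 : ℝ) 1) :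
    1 + (p - 1) * x ^ 2 ≤ ((((1 + x) ^ p + (1 - x) ^ p) / 2) ^ p⁻¹) ^ 2 := by
  have hp : 0 < p := by linarith
  have hseries := two_add_mul_sq_le_one_add_rpow_add_one_sub_rpow hp₁ hp₂ hx
  have ht : 0 ≤ p * (p - 1) * x ^ 2 / 2 := by
    have : 0 ≤ p - 1 := by linarith
    positivity
  rw [rpow_inv_sq (by linarith)]
  calc 1 + (p - 1) * x ^ 2 = 1 + 2 / p * (p * (p - 1) * x ^ 2 / 2) := by field_simp
    _ ≤ (1 + p * (p - 1) * x ^ 2 / 2) ^ (2 / p) :=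
      one_add_mul_self_le_rpow_one_add (by linarith) (by rw [le_div_iff₀ hp]; linarith)
    _ ≤ (((1 + x) ^ p + (1 - x) ^ p) / 2) ^ (2 / p) := by gcongr; linarith

lemma sq_add_mul_sq_le_rpow_inv_sq {p a b : ℝ} (hp₁ : 1 ≤ p) (hp₂ : p ≤ 2) (ha : 0 ≤ a)
    (hb : 0 ≤ b) :
    ((a + b) / 2) ^ 2 + (p - 1) * ((a - b) / 2) ^ 2 ≤ (((a ^ p + b ^ p) / 2) ^ p⁻¹) ^ 2 := by
  wlog hba : b ≤ a generalizing a b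
  · convert this hb ha (le_of_not_ge hba) using 2 <;> ring_nf
  obtain ⟨u, hu_def⟩ : ∃ u, u = (a + b) / 2 := ⟨_, rfl⟩
  rcases (by positivity : 0 ≤ (a + b) / 2).eq_or_lt with hu | hu
  · obtain rfl : a = 0 := by linarith
    obtain rfl : b = 0 := by linarith
    norm_num
    positivity
  rw [← hu_def] at hu ⊢
  obtain ⟨x, hx_def⟩ : ∃ x, x = (a - b) / 2 / u := ⟨_, rfl⟩
  have hx : x ∈ Set.Icc (0 : ℝ) 1 :=
    ⟨by rw [hx_def]; exact div_nonneg (by linarith) hu.le,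
      by rw [hx_def]; exact (div_le_one hu).2 (by linarith)⟩
  have hv : (a - b) / 2 = u * x := by rw [hx_def, mul_div_cancel₀ _ hu.ne']
  have hmean : (a ^ p + b ^ p) / 2 = u ^ p * (((1 + x) ^ p + (1 - x) ^ p) / 2) := by
    have hax : a = u * (1 + x) := by linarith
    have hbx : b = u * (1 - x) := by linarith
    rw [hax, hbx, mul_rpow hu.le (by linarith [hx.1]), mul_rpow hu.le (by linarith [hx.2])]
    ring
  have hm : 0 ≤ ((1 + x) ^ p + (1 - x) ^ p) / 2 := div_nonneg
    (add_nonneg (rpow_nonneg (by linarith [hx.1]) p) (rpow_nonneg (by linarith [hx.2]) p))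
    zero_le_two
  rw [hmean, mul_rpow (by positivity) hm, rpow_rpow_inv hu.le (by linarith), hv]
  nlinarith [one_add_mul_sq_le_rpow_inv_sq hp₁ hp₂ hx, sq_nonneg u]

lemma two_point_bonami {p a b c d : ℝ} (hp₁ : 1 ≤ p) (hp₂ : p ≤ 2)
    (ha : 0 ≤ a) (hb : 0 ≤ b) (hc : 0 ≤ c) (hd : 0 ≤ d) :
    p * (a * c + b * d) + (2 - p) * (a * d + b * c)
      ≤ 4 * ((a ^ p + b ^ p) / 2) ^ p⁻¹ * ((c ^ p + d ^ p) / 2) ^ p⁻¹ := by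
  set P := ((a ^ p + b ^ p) / 2) ^ p⁻¹
  set Q := ((c ^ p + d ^ p) / 2) ^ p⁻¹
  have hP : 0 ≤ P := by positivity
  have hQ : 0 ≤ Q := by positivity
  have hab := sq_add_mul_sq_le_rpow_inv_sq hp₁ hp₂ ha hb
  have hcd := sq_add_mul_sq_le_rpow_inv_sq hp₁ hp₂ hc hd
  set u := (a + b) / 2
  set v := (a - b) / 2
  set w := (c + d) / 2
  set z := (c - d) / 2
  have hρ : 0 ≤ p - 1 := by linarith
  -- Cauchy–Schwarz for the form `u w + (p - 1) v z`
  have hcs : (u * w + (p - 1) * (v * z)) ^ 2 ≤ (P * Q) ^ 2 :=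
    calc (u * w + (p - 1) * (v * z)) ^ 2
        ≤ (u ^ 2 + (p - 1) * v ^ 2) * (w ^ 2 + (p - 1) * z ^ 2) := by
          nlinarith [mul_nonneg hρ (sq_nonneg (u * z - v * w))]
      _ ≤ P ^ 2 * Q ^ 2 := mul_le_mul hab hcd (by positivity) (sq_nonneg P)
      _ = (P * Q) ^ 2 := by ring
  have hform := le_of_sq_le_sq hcs (by positivity)
  have expand : p * (a * c + b * d) + (2 - p) * (a * d + b * c)
      = 4 * (u * w + (p - 1) * (v * z)) := by simp only [u, v, w, z]; ring
  rw [expand]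
  linarith

lemma sum_bool_ite_mul_le {r s : ℝ} (hr : 0 < r) (hs : 0 ≤ s) (hsr : s ≤ r)
    {F G : Bool → ℝ} (hF : ∀ a, 0 ≤ F a) (hG : ∀ b, 0 ≤ G b) :
    ∑ a, ∑ b, (if a = b then r else s) * F a * G b
      ≤ (r + s) * 2 ^ (-(s / r)) * (∑ a, F a ^ (2 * r / (r + s))) ^ (2 * r / (r + s))⁻¹
        * (∑ b, G b ^ (2 * r / (r + s))) ^ (2 * r / (r + s))⁻¹ := by
  set p := 2 * r / (r + s) with hp_def
  have hrs : 0 < r + s := by linarith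
  have hp₁ : 1 ≤ p := by rw [hp_def, le_div_iff₀ hrs]; linarith
  have hp₂ : p ≤ 2 := by rw [hp_def, div_le_iff₀ hrs]; linarith
  have hmean : ∀ H : Bool → ℝ, (∀ a, 0 ≤ H a) →
      ((H true ^ p + H false ^ p) / 2) ^ p⁻¹ = 2 ^ (-p⁻¹) * (∑ a, H a ^ p) ^ p⁻¹ := by
    intro H hH
    rw [div_rpow (add_nonneg (rpow_nonneg (hH true) p) (rpow_nonneg (hH false) p)) zero_le_two,
      Fintype.sum_bool, rpow_neg zero_le_two]
    ring
  -- `2 / p = 1 + s / r`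
  have hconst : (r + s) / 2 * 4 * 2 ^ (-p⁻¹) * 2 ^ (-p⁻¹) = (r + s) * 2 ^ (-(s / r)) := by
    rw [mul_assoc _ (2 ^ (-p⁻¹)), ← rpow_add two_pos,
      show (r + s) / 2 * 4 = (r + s) * 2 ^ (2 : ℝ) / 2 by norm_num; ring, mul_div_assoc,
      ← rpow_sub_one two_ne_zero, mul_assoc, ← rpow_add two_pos, hp_def]
    congr 2
    field_simp
    ring
  calc ∑ a, ∑ b, (if a = b then r else s) * F a * G b
      = (r + s) / 2 * (p * (F true * G true + F false * G false)
          + (2 - p) * (F true * G false + F false * G true)) := by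
        simp only [Fintype.sum_bool, Bool.true_eq_false, Bool.false_eq_true, if_true, if_false,
          hp_def]
        field_simp
        ring
    _ ≤ (r + s) / 2 * (4 * ((F true ^ p + F false ^ p) / 2) ^ p⁻¹
          * ((G true ^ p + G false ^ p) / 2) ^ p⁻¹) := by
        gcongr
        exact two_point_bonami hp₁ hp₂ (hF _) (hF _) (hG _) (hG _)
    _ = (r + s) * 2 ^ (-(s / r)) * (∑ a, F a ^ p) ^ p⁻¹ * (∑ b, G b ^ p) ^ p⁻¹ := by
        rw [hmean F hF, hmean G hG, ← hconst]
        ring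

lemma sum_pi_fin_succ {α M : Type*} [Fintype α] [AddCommMonoid M] {n : ℕ}
    (h : (Fin (n + 1) → α) → M) : ∑ x, h x = ∑ a, ∑ x : Fin n → α, h (Fin.cons a x) := by
  rw [← (Fin.consEquiv fun _ => α).sum_comp, Fintype.sum_prod_type]
  rfl

lemma sum_sum_prod_mul_le_pow_mul {α : Type*} [Fintype α] {w : α → α → ℝ} {C p : ℝ}
    (hw : ∀ a b, 0 ≤ w a b) (hC : 0 ≤ C) (hp : 0 < p)
    (hbase : ∀ F G : α → ℝ, (∀ a, 0 ≤ F a) → (∀ b, 0 ≤ G b) →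
      ∑ a, ∑ b, w a b * F a * G b ≤ C * (∑ a, F a ^ p) ^ p⁻¹ * (∑ b, G b ^ p) ^ p⁻¹)
    (n : ℕ) {f g : (Fin n → α) → ℝ} (hf : ∀ x, 0 ≤ f x) (hg : ∀ y, 0 ≤ g y) :
    ∑ x, ∑ y, (∏ i, w (x i) (y i)) * f x * g y
      ≤ C ^ n * (∑ x, f x ^ p) ^ p⁻¹ * (∑ y, g y ^ p) ^ p⁻¹ := by
  induction n with
  | zero =>
    simp only [Fintype.sum_unique, univ_eq_empty, prod_empty, pow_zero, one_mul]
    rw [rpow_rpow_inv (hf _) hp.ne', rpow_rpow_inv (hg _) hp.ne']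
  | succ n ih =>
    set F : α → ℝ := fun a => (∑ x, f (Fin.cons a x) ^ p) ^ p⁻¹
    set G : α → ℝ := fun b => (∑ y, g (Fin.cons b y) ^ p) ^ p⁻¹
    have hFsum : ∀ a, 0 ≤ ∑ x, f (Fin.cons a x) ^ p :=
      fun a => sum_nonneg fun x _ => rpow_nonneg (hf _) p
    have hGsum : ∀ b, 0 ≤ ∑ y, g (Fin.cons b y) ^ p :=
      fun b => sum_nonneg fun y _ => rpow_nonneg (hg _) p
    have hF : ∀ a, 0 ≤ F a := fun a => rpow_nonneg (hFsum a) _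
    have hG : ∀ b, 0 ≤ G b := fun b => rpow_nonneg (hGsum b) _
    have hFp : ∑ a, F a ^ p = ∑ x, f x ^ p := by
      rw [sum_pi_fin_succ (fun x => f x ^ p)]
      exact sum_congr rfl fun a _ => rpow_inv_rpow (hFsum a) hp.ne'
    have hGp : ∑ b, G b ^ p = ∑ y, g y ^ p := by
      rw [sum_pi_fin_succ (fun y => g y ^ p)]
      exact sum_congr rfl fun b _ => rpow_inv_rpow (hGsum b) hp.ne'
    calc ∑ x, ∑ y, (∏ i, w (x i) (y i)) * f x * g y
        = ∑ a, ∑ b, w a b * ∑ x : Fin n → α, ∑ y : Fin n → α,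
            (∏ i, w (x i) (y i)) * f (Fin.cons a x) * g (Fin.cons b y) := by
          simp_rw [sum_pi_fin_succ, Fin.prod_univ_succ, Fin.cons_zero, Fin.cons_succ]
          refine sum_congr rfl fun a _ => ?_
          rw [sum_comm]
          simp_rw [mul_sum]
          exact sum_congr rfl fun b _ =>
            sum_congr rfl fun x _ => sum_congr rfl fun y _ => by ring
      _ ≤ ∑ a, ∑ b, w a b * (C ^ n * F a * G b) := by
          gcongr with a _ b _
          · exact hw a b
          · exact ih (fun x => hf _) (fun y => hg _)
      _ = C ^ n * ∑ a, ∑ b, w a b * F a * G b := by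
          simp_rw [mul_sum]
          exact sum_congr rfl fun a _ => sum_congr rfl fun b _ => by ring
      _ ≤ C ^ n * (C * (∑ a, F a ^ p) ^ p⁻¹ * (∑ b, G b ^ p) ^ p⁻¹) := by
          gcongr
          exact hbase F G hF hG
      _ = C ^ (n + 1) * (∑ x, f x ^ p) ^ p⁻¹ * (∑ y, g y ^ p) ^ p⁻¹ := by
          rw [hFp, hGp]
          ring

lemma pow_agree_mul_pow_sub_agree {M : Type*} [CommMonoid M] {n : ℕ} (r s : M)
    (x y : Fin n → Bool) :
    r ^ agree x y * s ^ (n - agree x y) = ∏ i, if x i = y i then r else s := by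
  have hcard := card_filter_add_card_filter_not (s := univ) fun i => x i = y i
  rw [card_univ, Fintype.card_fin] at hcard
  rw [prod_ite, prod_const, prod_const, agree]
  congr 2
  omega

lemma logb_sum_natCast_rpow_nonneg {ι : Type*} [Fintype ι] {b p : ℝ} (hb : 1 < b) (hp : 0 < p)
    (f : ι → ℕ) : 0 ≤ logb b (∑ i, (f i : ℝ) ^ p) := by
  by_cases hf : ∀ i, f i = 0
  · simp [hf, zero_rpow hp.ne']
  push Not at hf
  obtain ⟨i, hi⟩ := hf
  refine logb_nonneg hb ((one_le_rpow ?_ hp.le).trans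
    (single_le_sum (fun j _ => rpow_nonneg (Nat.cast_nonneg _) p) (mem_univ i)))
  exact_mod_cast Nat.one_le_iff_ne_zero.2 hi

lemma logb_le_logb_add_mul_of_le_mul_rpow {b S K A B e : ℝ} (hb : 1 < b) (he : 0 < e)
    (hS : 0 ≤ S) (hA : 0 ≤ A) (hB : 0 ≤ B) (hK : 0 ≤ logb b K) (hlogA : 0 ≤ logb b A)
    (hlogB : 0 ≤ logb b B) (h : S ≤ K * A ^ e * B ^ e) :
    logb b S ≤ logb b K + e * (logb b A + logb b B) := by
  rcases hS.eq_or_lt with rfl | hS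
  · rw [logb_zero]
    positivity
  have hA' : 0 < A := hA.lt_of_ne <| by
    rintro rfl
    rw [zero_rpow he.ne', mul_zero, zero_mul] at h
    linarith
  have hB' : 0 < B := hB.lt_of_ne <| by
    rintro rfl
    rw [zero_rpow he.ne', mul_zero] at h
    linarith
  have hK' : 0 < K := by
    by_contra! hK₀
    have : K * A ^ e * B ^ e ≤ 0 :=
      mul_nonpos_of_nonpos_of_nonneg (mul_nonpos_of_nonpos_of_nonneg hK₀ (by positivity))
        (by positivity)
    linarith
  calc logb b S ≤ logb b (K * A ^ e * B ^ e) := logb_le_logb_of_le hb hS h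
    _ = logb b K + e * (logb b A + logb b B) := by
      rw [logb_mul (by positivity) (by positivity), logb_mul (by positivity) (by positivity),
        logb_rpow_eq_mul_logb_of_pos hA', logb_rpow_eq_mul_logb_of_pos hB']
      ring

/-- The non-Boolean counting form of the hypercontractive inequality. -/
theorem counting_form_general (n : ℕ) (r s : ℕ) (hs : 1 ≤ s) (hrs : s ≤ r)
    (f g : (Fin n → Bool) → ℕ) :
    Real.logb 2 (∑ x : Fin n → Bool, ∑ y : Fin n → Bool,
        (r:ℝ) ^ (agree x y) * (s:ℝ) ^ (n - agree x y) * f x * g y)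
      ≤ n * (Real.logb 2 ((r:ℝ)+s) - (s:ℝ)/r)
        + (((r:ℝ)+s)/(2*r)) *
          (Real.logb 2 (∑ x : Fin n → Bool, (f x : ℝ) ^ ((2*(r:ℝ))/((r:ℝ)+s)))
            + Real.logb 2 (∑ y : Fin n → Bool, (g y : ℝ) ^ ((2*(r:ℝ))/((r:ℝ)+s)))) := by
  have hs' : (1 : ℝ) ≤ s := by exact_mod_cast hs
  have hsr : (s : ℝ) ≤ r := by exact_mod_cast hrs
  have hr : (0 : ℝ) < r := by linarith
  have hp : 0 < 2 * (r : ℝ) / (r + s) := by positivity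
  have hlogC :
      logb 2 (((r : ℝ) + s) * 2 ^ (-((s : ℝ) / r))) = logb 2 ((r : ℝ) + s) - s / r := by
    rw [logb_mul (by positivity) (by positivity), logb_rpow two_pos (by norm_num)]
    ring
  have hlogC₀ : 0 ≤ logb 2 ((r : ℝ) + s) - s / r := by
    have h1 : 1 ≤ logb 2 ((r : ℝ) + s) := by
      rw [le_logb_iff_rpow_le one_lt_two (by positivity), rpow_one]
      linarith
    have h2 : (s : ℝ) / r ≤ 1 := div_le_one_of_le₀ hsr (by positivity)
    linarith
  have key := sum_sum_prod_mul_le_pow_mul (fun a b => by positivity) (by positivity) hp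
    (fun F G hF hG => sum_bool_ite_mul_le hr (by positivity) hsr hF hG) n
    (f := fun x => (f x : ℝ)) (g := fun y => (g y : ℝ)) (fun x => by positivity)
    (fun y => by positivity)
  simp_rw [← pow_agree_mul_pow_sub_agree] at key
  rw [← hlogC, ← logb_pow, ← inv_div (2 * (r : ℝ))]
  exact logb_le_logb_add_mul_of_le_mul_rpow one_lt_two (by positivity) (by positivity)
    (by positivity) (by positivity) (by rw [logb_pow, hlogC]; positivity)
    (logb_sum_natCast_rpow_nonneg one_lt_two hp f) (logb_sum_natCast_rpow_nonneg one_lt_two hp g)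
    key
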